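/- arXiv:2605.17487 — 3 statements merged into one kernel-verified Lean document; each statement's English description precedes it below -/
import Mathlib

section
/- For the grid-forming SVG system dx/dt = J∇H(x) + Bd + C(x)u with H(x) = (L/2)(x₁²+x₂²) + (C/2)(x₃²+x₄²) + x₅, where J is the given skew-symmetric matrix, B = (1/C)[0,0;0,0;1,0;0,1;0,0], and C(x) = [1/L,0;0,1/L;0,0;0,0;-x₁,-x₂], the time derivative of H along any solution satisfies dH/dt = -x₃·i_g^d - x₄·i_g^q; in particular the energy change depends only on the disturbance input and not on the control input. -/
theorem HasDerivAt.const_mul_half_sq_add_sq {f g : ℝ → ℝ} {f' g' t : ℝ} (k : ℝ)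
    (hf : HasDerivAt f f' t) (hg : HasDerivAt g g' t) :
    HasDerivAt (fun s => k / 2 * (f s ^ 2 + g s ^ 2)) (k * (f t * f' + g t * g')) t := by
  refine (((hf.fun_pow 2).add (hg.fun_pow 2)).const_mul (k / 2)).congr_deriv ?_
  simp only [Nat.cast_ofNat, Nat.add_one_sub_one, pow_one]
  ring

theorem svg_energy_derivative_general
    (L C ω : ℝ) (hL : 0 < L) (hC : 0 < C)
    (x : ℝ → Fin 5 → ℝ) (u d : ℝ → Fin 2 → ℝ) (t : ℝ)
    (h1 : HasDerivAt (fun s => x s 0) (ω * x t 1 - x t 2 / L + u t 0 / L) t)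
    (h2 : HasDerivAt (fun s => x s 1) (-ω * x t 0 - x t 3 / L + u t 1 / L) t)
    (h3 : HasDerivAt (fun s => x s 2) (x t 0 / C + ω * x t 3 - d t 0 / C) t)
    (h4 : HasDerivAt (fun s => x s 3) (x t 1 / C - ω * x t 2 - d t 1 / C) t)
    (h5 : HasDerivAt (fun s => x s 4) (-(x t 0) * u t 0 - x t 1 * u t 1) t) :
    HasDerivAt
      (fun s => L / 2 * ((x s 0) ^ 2 + (x s 1) ^ 2)
        + C / 2 * ((x s 2) ^ 2 + (x s 3) ^ 2) + x s 4)
      (-(x t 2) * d t 0 - x t 3 * d t 1) t := by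
  have hInductor := HasDerivAt.const_mul_half_sq_add_sq L h1 h2
  have hCapacitor := HasDerivAt.const_mul_half_sq_add_sq C h3 h4
  refine ((hInductor.add hCapacitor).add h5).congr_deriv ?_
  -- The `ω` terms cancel because `J` is skew-symmetric, the `x₁ x₃`, `x₂ x₄` coupling terms
  -- cancel between inductor and capacitor, and `ẋ₅` absorbs the power `x₁ u₁ + x₂ u₂` injected
  -- by the control.
  field_simp [hL.ne', hC.ne']
  ring

/-- Along any solution of the grid-forming SVG system, the energy
`H(x) = (L/2)(x₁²+x₂²) + (C/2)(x₃²+x₄²) + x₅` satisfies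
`dH/dt = -x₃ i_g^d - x₄ i_g^q`, independently of the control input. -/
theorem svg_energy_derivative
    (L C ω : ℝ) (hL : 0 < L) (hC : 0 < C) (hω : 0 < ω)
    (x : ℝ → Fin 5 → ℝ) (u d : ℝ → Fin 2 → ℝ) (t : ℝ)
    (h1 : HasDerivAt (fun s => x s 0) (ω * x t 1 - x t 2 / L + u t 0 / L) t)
    (h2 : HasDerivAt (fun s => x s 1) (-ω * x t 0 - x t 3 / L + u t 1 / L) t)
    (h3 : HasDerivAt (fun s => x s 2) (x t 0 / C + ω * x t 3 - d t 0 / C) t)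
    (h4 : HasDerivAt (fun s => x s 3) (x t 1 / C - ω * x t 2 - d t 1 / C) t)
    (h5 : HasDerivAt (fun s => x s 4) (-(x t 0) * u t 0 - x t 1 * u t 1) t) :
    HasDerivAt
      (fun s => L / 2 * ((x s 0) ^ 2 + (x s 1) ^ 2)
        + C / 2 * ((x s 2) ^ 2 + (x s 3) ^ 2) + x s 4)
      (-(x t 2) * d t 0 - x t 3 * d t 1) t :=
  svg_energy_derivative_general L C ω hL hC x u d t h1 h2 h3 h4 h5
end

section
/- The implicit midpoint scheme (x_{k+1} - x_k)/h = J∇H((x_{k+1}+x_k)/2) + C((x_{k+1}+x_k)/2)u_k applied to the SVG system with zero disturbance exactly conserves the Hamiltonian: H(x_{k+1}) = H(x_k) for every step, for any control u_k ∈ ℝ² and step size h > 0. -/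
/-!
The midpoint value of `∇H` is a discrete gradient of the Hamiltonian, `H y - H x = ∇H((x+y)/2) ⬝ (y - x)`,
since `H` is quadratic plus linear. Pairing the midpoint step with `g = ∇H((x+y)/2)` therefore gives
`H(x_{k+1}) - H(x_k) = h (g ⬝ J g + (gᵀ C) u)`, where `g ⬝ J g = 0` by skew-symmetry of `J`, and `gᵀ C = 0`
because `C(x)ᵀ ∇H(x) = 0` at every point, in particular at the midpoint.
-/

open Matrix

theorem Matrix.dotProduct_mulVec_self_eq_zero_of_transpose_eq_neg {n R : Type*} [Fintype n]
    [CommRing R] [IsAddTorsionFree R] {J : Matrix n n R} (hJ : Jᵀ = -J) (v : n → R) :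
    v ⬝ᵥ (J *ᵥ v) = 0 :=
  self_eq_neg.mp <| calc
    v ⬝ᵥ (J *ᵥ v) = (Jᵀ *ᵥ v) ⬝ᵥ v := by rw [mulVec_transpose, dotProduct_mulVec]
    _ = -(v ⬝ᵥ (J *ᵥ v)) := by rw [hJ, neg_mulVec, neg_dotProduct, dotProduct_comm]

theorem eq_of_discreteGradient_step {n k R : Type*} [Fintype n] [Fintype k] [CommRing R]
    [IsAddTorsionFree R] (H : (n → R) → R) {x y g : n → R} (hH : H y - H x = g ⬝ᵥ (y - x))
    {J : Matrix n n R} (hJ : Jᵀ = -J) {B : Matrix n k R} (hB : g ᵥ* B = 0) (u : k → R) (h : R)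
    (hstep : y - x = h • (J *ᵥ g + B *ᵥ u)) :
    H y = H x := by
  have hwork : g ⬝ᵥ (y - x) = 0 := by
    rw [hstep, dotProduct_smul, dotProduct_add, dotProduct_mulVec_self_eq_zero_of_transpose_eq_neg hJ,
      dotProduct_mulVec g B, hB, zero_dotProduct, add_zero, smul_zero]
  exact sub_eq_zero.mp (hH.trans hwork)

noncomputable section

namespace SVG

variable (L C ω : ℝ)

def hamiltonian (x : Fin 5 → ℝ) : ℝ :=
  L / 2 * (x 0 ^ 2 + x 1 ^ 2) + C / 2 * (x 2 ^ 2 + x 3 ^ 2) + x 4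

def gradient (x : Fin 5 → ℝ) : Fin 5 → ℝ :=
  ![L * x 0, L * x 1, C * x 2, C * x 3, 1]

def interconnection : Matrix (Fin 5) (Fin 5) ℝ :=
  !![0, ω/L, -(1/(C*L)), 0, 0;
     -(ω/L), 0, 0, -(1/(C*L)), 0;
     1/(C*L), 0, 0, ω/C, 0;
     0, 1/(C*L), -(ω/C), 0, 0;
     0, 0, 0, 0, 0]

def inputMatrix (x : Fin 5 → ℝ) : Matrix (Fin 5) (Fin 2) ℝ :=
  !![1/L, 0; 0, 1/L; 0, 0; 0, 0; -(x 0), -(x 1)]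

theorem hamiltonian_sub_eq_gradient_midpoint_dotProduct (x y : Fin 5 → ℝ) :
    hamiltonian L C y - hamiltonian L C x = gradient L C (fun i => (x i + y i) / 2) ⬝ᵥ (y - x) := by
  simp [hamiltonian, gradient, dotProduct, Fin.sum_univ_five]
  ring

theorem interconnection_transpose : (interconnection L C ω)ᵀ = -interconnection L C ω := by
  ext i j
  fin_cases i <;> fin_cases j <;> simp [interconnection]

variable {L} in
theorem gradient_vecMul_inputMatrix (hL : L ≠ 0) (x : Fin 5 → ℝ) :
    gradient L C x ᵥ* inputMatrix L x = 0 := by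
  ext j
  fin_cases j <;> simp [gradient, inputMatrix, vecMul, dotProduct, Fin.sum_univ_five, mul_right_comm L _ L⁻¹, hL]

end SVG

end

theorem svg_midpoint_energy_conservation_general
    (L C ω h : ℝ) (hL : 0 < L)
    (xk xk1 : Fin 5 → ℝ) (u : Fin 2 → ℝ)
    (m : Fin 5 → ℝ) (hm : m = fun i => (xk i + xk1 i) / 2)
    (J : Matrix (Fin 5) (Fin 5) ℝ)
    (hJ : J = !![0, ω/L, -(1/(C*L)), 0, 0;
                 -(ω/L), 0, 0, -(1/(C*L)), 0;
                 1/(C*L), 0, 0, ω/C, 0;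
                 0, 1/(C*L), -(ω/C), 0, 0;
                 0, 0, 0, 0, 0])
    (Cm : Matrix (Fin 5) (Fin 2) ℝ)
    (hCm : Cm = !![1/L, 0; 0, 1/L; 0, 0; 0, 0; -(m 0), -(m 1)])
    (hstep : xk1 - xk
      = h • (J.mulVec ![L * m 0, L * m 1, C * m 2, C * m 3, 1] + Cm.mulVec u)) :
    L / 2 * ((xk1 0) ^ 2 + (xk1 1) ^ 2) + C / 2 * ((xk1 2) ^ 2 + (xk1 3) ^ 2) + xk1 4
      = L / 2 * ((xk 0) ^ 2 + (xk 1) ^ 2) + C / 2 * ((xk 2) ^ 2 + (xk 3) ^ 2) + xk 4 := by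
  subst hJ hCm
  have hH := SVG.hamiltonian_sub_eq_gradient_midpoint_dotProduct L C xk xk1
  rw [← hm] at hH
  exact eq_of_discreteGradient_step (SVG.hamiltonian L C) hH (SVG.interconnection_transpose L C ω)
    (SVG.gradient_vecMul_inputMatrix C hL.ne' m) u h hstep

/-- The implicit midpoint scheme applied to the SVG system with
zero disturbance exactly conserves the Hamiltonian: `H(x_{k+1}) = H(x_k)`. -/
theorem svg_midpoint_energy_conservation
    (L C ω h : ℝ) (hL : 0 < L) (hC : 0 < C) (hω : 0 < ω) (hh : 0 < h)
    (xk xk1 : Fin 5 → ℝ) (u : Fin 2 → ℝ)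
    (m : Fin 5 → ℝ) (hm : m = fun i => (xk i + xk1 i) / 2)
    (J : Matrix (Fin 5) (Fin 5) ℝ)
    (hJ : J = !![0, ω/L, -(1/(C*L)), 0, 0;
                 -(ω/L), 0, 0, -(1/(C*L)), 0;
                 1/(C*L), 0, 0, ω/C, 0;
                 0, 1/(C*L), -(ω/C), 0, 0;
                 0, 0, 0, 0, 0])
    (Cm : Matrix (Fin 5) (Fin 2) ℝ)
    (hCm : Cm = !![1/L, 0; 0, 1/L; 0, 0; 0, 0; -(m 0), -(m 1)])
    (hstep : xk1 - xk
      = h • (J.mulVec ![L * m 0, L * m 1, C * m 2, C * m 3, 1] + Cm.mulVec u)) :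
    L / 2 * ((xk1 0) ^ 2 + (xk1 1) ^ 2) + C / 2 * ((xk1 2) ^ 2 + (xk1 3) ^ 2) + xk1 4
      = L / 2 * ((xk 0) ^ 2 + (xk 1) ^ 2) + C / 2 * ((xk 2) ^ 2 + (xk 3) ^ 2) + xk 4 :=
  svg_midpoint_energy_conservation_general L C ω h hL xk xk1 u m hm J hJ Cm hCm hstep
end

section
/- For the implicit midpoint scheme applied to the SVG system with disturbance d_k, the discrete energy balance H(x_{k+1}) - H(x_k) = h·∇H((x_{k+1}+x_k)/2)ᵀ B d_k holds exactly; i.e., the scheme is Dirac-structure-preserving with B_{k,k+1} = B. -/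
set_option maxHeartbeats 1000000 in
/-- For the implicit midpoint scheme with disturbance `d_k`, the
discrete energy balance `H(x_{k+1}) - H(x_k) = h ∇H(m)ᵀ B d_k` holds exactly
(Dirac-structure preservation with `B_{k,k+1} = B`). -/
theorem svg_midpoint_discrete_energy_balance
    (L C ω h : ℝ) (hL : 0 < L) (hC : 0 < C) (hω : 0 < ω) (hh : 0 < h)
    (xk xk1 : Fin 5 → ℝ) (u dk : Fin 2 → ℝ)
    (m : Fin 5 → ℝ) (hm : m = fun i => (xk i + xk1 i) / 2)
    (J : Matrix (Fin 5) (Fin 5) ℝ)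
    (hJ : J = !![0, ω/L, -(1/(C*L)), 0, 0;
                 -(ω/L), 0, 0, -(1/(C*L)), 0;
                 1/(C*L), 0, 0, ω/C, 0;
                 0, 1/(C*L), -(ω/C), 0, 0;
                 0, 0, 0, 0, 0])
    (B : Matrix (Fin 5) (Fin 2) ℝ)
    (hB : B = !![0, 0; 0, 0; 1/C, 0; 0, 1/C; 0, 0])
    (Cm : Matrix (Fin 5) (Fin 2) ℝ)
    (hCm : Cm = !![1/L, 0; 0, 1/L; 0, 0; 0, 0; -(m 0), -(m 1)])
    (hstep : xk1 - xk
      = h • (J.mulVec ![L * m 0, L * m 1, C * m 2, C * m 3, 1]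
              + B.mulVec dk + Cm.mulVec u)) :
    (L / 2 * ((xk1 0) ^ 2 + (xk1 1) ^ 2) + C / 2 * ((xk1 2) ^ 2 + (xk1 3) ^ 2) + xk1 4)
      - (L / 2 * ((xk 0) ^ 2 + (xk 1) ^ 2) + C / 2 * ((xk 2) ^ 2 + (xk 3) ^ 2) + xk 4)
    = h * ∑ i, (![L * m 0, L * m 1, C * m 2, C * m 3, 1] : Fin 5 → ℝ) i
        * (B.mulVec dk) i := by
  subst hJ hB hCm hm
  have h0 := congrFun hstep 0
  have h1 := congrFun hstep 1
  have h2 := congrFun hstep 2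
  have h3 := congrFun hstep 3
  have h4 := congrFun hstep 4
  simp [Matrix.mulVec, dotProduct, Fin.sum_univ_five, Fin.sum_univ_two,
    Matrix.cons_val_zero, Matrix.cons_val_one, Matrix.head_cons, Matrix.cons_val_two,
    Matrix.tail_cons, Matrix.cons_val_three, Matrix.cons_val_four, Matrix.head_fin_const,
    Pi.sub_apply, Pi.smul_apply, Pi.add_apply, smul_eq_mul, Matrix.cons_val', Matrix.empty_val',
    Matrix.cons_val_fin_one, Matrix.vecHead, Matrix.vecTail, Function.comp] at h0 h1 h2 h3 h4 ⊢
  have hL' := hL.ne'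
  have hC' := hC.ne'
  linear_combination (norm := (field_simp; ring1)) (L*(xk 0 + xk1 0)/2) * h0
    + (L*(xk 1 + xk1 1)/2) * h1
    + (C*(xk 2 + xk1 2)/2) * h2 + (C*(xk 3 + xk1 3)/2) * h3 + h4
end
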